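/- Suppose ε ∈ [0, ln 2] and a mechanism P_{Y|Xⁿ} on finite alphabets satisfies ε-MI-DP, i.e. for every joint probability mass function P_{Xⁿ} and every index i, I(X_i; Y | X^{−i}) ≤ ε nats. Let p ∈ [0, 1/2] be the unique value with h(p) = ln 2 − ε, where h(p) = −p ln p − (1−p) ln(1−p) is the binary entropy in nats. Then the mechanism satisfies (0, δ')-differential privacy with δ' = 1 − 2p: for all neighboring datasets x, x̃ and all S ⊆ 𝒴, P_{Y|Xⁿ}(S|x) ≤ P_{Y|Xⁿ}(S|x̃) + 1 − 2p. -/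
import Mathlib


open Real
open scoped BigOperators

/-- Two datasets are neighbors if they differ in exactly one coordinate. -/
def Neighbor {n : ℕ} {𝒳 : Fin n → Type*} (x x' : ∀ i, 𝒳 i) : Prop :=
  ∃ i, x i ≠ x' i ∧ ∀ j, j ≠ i → x j = x' j

/-- The conditional mutual information `I(X_i; Y | X^{−i})` (in nats) of the joint
distribution of `(Xⁿ, Y)` induced by a prior pmf `μ` on datasets and a mechanism
(channel) `Q = P_{Y|Xⁿ}`; here `X^{−i}` denotes all dataset coordinates except the
`i`-th.  The inner logarithm is `log (P(y|x) / P(y | x^{−i}))`. -/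
noncomputable def condMI {n : ℕ} {𝒳 : Fin n → Type*} [∀ i, Fintype (𝒳 i)]
    {𝒴 : Type*} [Fintype 𝒴]
    (μ : (∀ i, 𝒳 i) → ℝ) (Q : (∀ i, 𝒳 i) → 𝒴 → ℝ) (i : Fin n) : ℝ :=
  ∑ x, ∑ y, μ x * Q x y *
    log ((Q x y * ∑ a, μ (Function.update x i a)) /
      (∑ a, μ (Function.update x i a) * Q (Function.update x i a) y))


lemma gibbs' (u w : ℝ) (hu : 0 ≤ u) (hw : 0 < w) :
    u - w ≤ u * Real.log u - u * Real.log w := by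
  rcases eq_or_lt_of_le hu with h | h
  · simp [← h]; linarith
  · have h1 : Real.log (w / u) ≤ w / u - 1 := Real.log_le_sub_one_of_pos (by positivity)
    rw [Real.log_div (ne_of_gt hw) (ne_of_gt h)] at h1
    have h2 := mul_le_mul_of_nonneg_left h1 h.le
    have h3 : u * (w / u - 1) = w - u := by field_simp
    nlinarith

lemma entropy_le (q : ℝ) (h0 : 0 < q) (h1 : q < 1) :
    -(q * Real.log q) - (1 - q) * Real.log (1 - q) ≤ Real.log 2 := by
  have g1 := gibbs' q (1 / 2) h0.le (by norm_num)
  have g2 := gibbs' (1 - q) (1 / 2) (by linarith) (by norm_num)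
  have hl : Real.log (1 / 2) = -Real.log 2 := by rw [one_div, Real.log_inv]
  rw [hl] at g1 g2
  linarith

lemma pointwise_bound (q a b : ℝ) (hq0 : 0 < q) (hq2 : q < 1 / 2) (ha : 0 ≤ a) (hb : 0 ≤ b) :
    (Real.log (1 - q) - Real.log q) / 4 * (a - b) ≤
      1 / 2 * a * Real.log (a / (1 / 2 * a + 1 / 2 * b)) +
      1 / 2 * b * Real.log (b / (1 / 2 * a + 1 / 2 * b)) +
      ((Real.log (1 - q) - Real.log q) / 4 * (1 - 2 * q)
        - (Real.log 2 - (-(q * Real.log q) - (1 - q) * Real.log (1 - q))) / 2) * (a + b) := by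
  have hq1 : 0 < 1 - q := by linarith
  rcases eq_or_lt_of_le (by positivity : (0:ℝ) ≤ a + b) with ht | ht
  · have ha0 : a = 0 := by linarith
    have hb0 : b = 0 := by linarith
    simp [ha0, hb0]
  · -- expansions of the log terms
    have expand : ∀ c : ℝ, 0 ≤ c → c * Real.log (c / (1 / 2 * a + 1 / 2 * b))
        = c * Real.log c - c * Real.log (a + b) + c * Real.log 2 := by
      intro c hc
      rcases eq_or_lt_of_le hc with h | h
      · simp [← h]
      · have hd : (1 / 2 * a + 1 / 2 * b) = (a + b) / 2 := by ring
        rw [hd, Real.log_div (ne_of_gt h) (by positivity),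
          Real.log_div (ne_of_gt ht) (by norm_num)]
        ring
    rw [mul_assoc, mul_assoc, expand a ha, expand b hb]
    have g1 := gibbs' a ((a + b) * (1 - q)) ha (by positivity)
    have g2 := gibbs' b ((a + b) * q) hb (by positivity)
    rw [Real.log_mul (ne_of_gt ht) (ne_of_gt hq1)] at g1
    rw [Real.log_mul (ne_of_gt ht) (ne_of_gt hq0)] at g2
    nlinarith [g1, g2]

set_option maxHeartbeats 1000000 in
/-- For `ε ∈ [0, ln 2]`, if a mechanism satisfies `ε`-MI-DP and `p ∈ [0, 1/2]` is the
value with binary entropy `h(p) = ln 2 − ε` (in nats), then the mechanism satisfies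
`(0, δ')`-differential privacy with `δ' = 1 − 2p`. -/
theorem delta_dp_of_mi_dp_tight {n : ℕ} {𝒳 : Fin n → Type*} [∀ i, Fintype (𝒳 i)]
    {𝒴 : Type*} [Fintype 𝒴]
    (Q : (∀ i, 𝒳 i) → 𝒴 → ℝ) (ε : ℝ) (hε0 : 0 ≤ ε) (hε2 : ε ≤ log 2)
    (hQ0 : ∀ x y, 0 ≤ Q x y) (hQ1 : ∀ x, ∑ y, Q x y = 1)
    (hMIDP : ∀ (μ : (∀ i, 𝒳 i) → ℝ), (∀ x, 0 ≤ μ x) → (∑ x, μ x = 1) →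
      ∀ i, condMI μ Q i ≤ ε)
    (p : ℝ) (hp0 : 0 ≤ p) (hp2 : p ≤ 1 / 2)
    (hpε : -(p * log p) - (1 - p) * log (1 - p) = log 2 - ε) :
    ∀ x xt, Neighbor x xt → ∀ S : Finset 𝒴,
      ∑ y ∈ S, Q x y ≤ (∑ y ∈ S, Q xt y) + (1 - 2 * p) := by
  classical
  intro x xt hnb S
  obtain ⟨i, hne, hagree⟩ := hnb
  -- basic facts about the pair x, xt
  have hxt_eq : xt = Function.update x i (xt i) := by
    funext j
    by_cases hj : j = i
    · subst hj; simp
    · rw [Function.update_of_ne hj]; exact (hagree j hj).symm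
  have hxxt : x ≠ xt := fun h => hne (by rw [h])
  -- the two-point uniform prior
  set μ : (∀ j, 𝒳 j) → ℝ := fun z => if z = x then 1/2 else if z = xt then 1/2 else 0 with hμdef
  have hμx : μ x = 1/2 := by simp [hμdef]
  have hμxt : μ xt = 1/2 := by simp [hμdef, Ne.symm hxxt, hxxt]
  have hμ0 : ∀ z, 0 ≤ μ z := by
    intro z; simp only [hμdef]; split_ifs <;> norm_num
  have hμother : ∀ z, z ≠ x → z ≠ xt → μ z = 0 := by
    intro z h1 h2; simp [hμdef, h1, h2]
  have hupd_x : ∀ c : 𝒳 i, Function.update x i c = x ↔ c = x i := by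
    intro c
    constructor
    · intro h; have := congrFun h i; simpa using this
    · rintro rfl; exact Function.update_eq_self i x
  have hupd_xt : ∀ c : 𝒳 i, Function.update x i c = xt ↔ c = xt i := by
    intro c
    constructor
    · intro h
      have := congrFun h i
      simp only [Function.update_self] at this
      exact this
    · rintro rfl; exact hxt_eq.symm
  -- fiber sums
  have hfib : ∀ f : (∀ j, 𝒳 j) → ℝ,
      (∑ c : 𝒳 i, μ (Function.update x i c) * f (Function.update x i c))
        = 1/2 * f x + 1/2 * f xt := by
    intro f
    have hpt : ∀ c : 𝒳 i, μ (Function.update x i c) * f (Function.update x i c)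
        = (if c = x i then 1/2 * f x else 0) + (if c = xt i then 1/2 * f xt else 0) := by
      intro c
      by_cases h1 : c = x i
      · subst h1
        have h2 : Function.update x i (x i) = x := Function.update_eq_self i x
        rw [h2, hμx]
        have hni : x i ≠ xt i := hne
        simp [hni]
      · by_cases h2 : c = xt i
        · subst h2
          have h3 : Function.update x i (xt i) = xt := hxt_eq.symm
          rw [h3, hμxt]
          simp [h1]
        · have h3 : Function.update x i c ≠ x := fun h => h1 ((hupd_x c).mp h)
          have h4 : Function.update x i c ≠ xt := fun h => h2 ((hupd_xt c).mp h)
          rw [hμother _ h3 h4]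
          simp [h1, h2]
    rw [Finset.sum_congr rfl fun c _ => hpt c, Finset.sum_add_distrib,
      Finset.sum_ite_eq' Finset.univ (x i) (fun _ => 1/2 * f x),
      Finset.sum_ite_eq' Finset.univ (xt i) (fun _ => 1/2 * f xt)]
    simp
  have hS1x : (∑ c : 𝒳 i, μ (Function.update x i c)) = 1 := by
    have h := hfib fun _ => 1
    simp only [mul_one] at h
    rw [h]; norm_num
  have hS2x : ∀ y, (∑ c : 𝒳 i, μ (Function.update x i c) * Q (Function.update x i c) y)
      = 1/2 * Q x y + 1/2 * Q xt y := fun y => hfib fun z => Q z y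
  have hup_xt_x : ∀ c : 𝒳 i, Function.update xt i c = Function.update x i c := by
    intro c
    conv_lhs => rw [hxt_eq]
    rw [Function.update_idem]
  -- the value of condMI for this prior
  set G : 𝒴 → ℝ := fun y =>
    1/2 * Q x y * Real.log (Q x y / (1/2 * Q x y + 1/2 * Q xt y)) +
    1/2 * Q xt y * Real.log (Q xt y / (1/2 * Q x y + 1/2 * Q xt y)) with hGdef
  have hμsum : ∑ z, μ z = 1 := by
    have hpt : ∀ z, μ z = (if z = x then (1:ℝ)/2 else 0) + (if z = xt then (1:ℝ)/2 else 0) := by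
      intro z
      by_cases h1 : z = x
      · subst h1; simp [hμx, hxxt]
      · by_cases h2 : z = xt
        · subst h2; simp [hμxt, h1]
        · simp [hμother z h1 h2, h1, h2]
    rw [Finset.sum_congr rfl fun z _ => hpt z, Finset.sum_add_distrib,
      Finset.sum_ite_eq' Finset.univ x (fun _ => (1:ℝ)/2),
      Finset.sum_ite_eq' Finset.univ xt (fun _ => (1:ℝ)/2)]
    norm_num
  have hJSD : condMI μ Q i = ∑ y, G y := by
    unfold condMI
    have hpt : ∀ z, (∑ y, μ z * Q z y *
        Real.log ((Q z y * ∑ c, μ (Function.update z i c)) /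
          (∑ c, μ (Function.update z i c) * Q (Function.update z i c) y)))
        = (if z = x then (∑ y, 1/2 * Q x y * Real.log (Q x y / (1/2 * Q x y + 1/2 * Q xt y))) else 0)
          + (if z = xt then (∑ y, 1/2 * Q xt y * Real.log (Q xt y / (1/2 * Q x y + 1/2 * Q xt y))) else 0) := by
      intro z
      by_cases h1 : z = x
      · rw [h1, if_pos rfl, if_neg hxxt, add_zero]
        refine Finset.sum_congr rfl fun y _ => ?_
        rw [hμx, hS1x, hS2x, mul_one]
      · by_cases h2 : z = xt
        · rw [h2, if_neg (Ne.symm hxxt), if_pos rfl, zero_add]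
          simp only [hup_xt_x]
          refine Finset.sum_congr rfl fun y _ => ?_
          rw [hμxt, hS1x, hS2x, mul_one]
        · rw [if_neg h1, if_neg h2, add_zero]
          refine Finset.sum_eq_zero fun y _ => ?_
          rw [hμother z h1 h2]
          ring
    rw [Finset.sum_congr rfl fun z _ => hpt z, Finset.sum_add_distrib,
      Finset.sum_ite_eq' Finset.univ x, Finset.sum_ite_eq' Finset.univ xt]
    simp only [Finset.mem_univ, if_true]
    rw [← Finset.sum_add_distrib]
  have hJSDle : (∑ y, G y) ≤ ε := hJSD ▸ hMIDP μ hμ0 hμsum i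
  set α := ∑ y ∈ S, Q x y with hα
  set β := ∑ y ∈ S, Q xt y with hβ
  have hβ0 : (0:ℝ) ≤ β := Finset.sum_nonneg fun y _ => hQ0 xt y
  have hα1 : α ≤ 1 := by
    have h := Finset.sum_le_sum_of_subset_of_nonneg (Finset.subset_univ S)
      (fun y _ _ => hQ0 x y)
    rw [hQ1 x] at h
    exact h
  -- the key bound, for any parameter q ∈ (0, 1/2)
  have key : ∀ q : ℝ, 0 < q → q < 1/2 →
      (Real.log (1-q) - Real.log q) / 2 * (α - β) ≤
        ε + 2 * ((Real.log (1-q) - Real.log q)/4 * (1 - 2*q)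
          - (Real.log 2 - (-(q*Real.log q) - (1-q)*Real.log (1-q)))/2) := by
    intro q hq0 hq2
    set L := Real.log (1-q) - Real.log q with hL
    set C := L/4*(1 - 2*q) - (Real.log 2 - (-(q*Real.log q) - (1-q)*Real.log (1-q)))/2 with hC
    have h1 : ∀ y ∈ S, L/4 * (Q x y - Q xt y) ≤ G y + C * (Q x y + Q xt y) := by
      intro y _
      have h := pointwise_bound q (Q x y) (Q xt y) hq0 hq2 (hQ0 x y) (hQ0 xt y)
      rw [← hL, ← hC] at h
      simp only [hGdef]
      linarith
    have h2 : ∀ y ∈ Sᶜ, L/4 * (Q xt y - Q x y) ≤ G y + C * (Q x y + Q xt y) := by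
      intro y _
      have h := pointwise_bound q (Q xt y) (Q x y) hq0 hq2 (hQ0 xt y) (hQ0 x y)
      have e : 1/2 * Q xt y + 1/2 * Q x y = 1/2 * Q x y + 1/2 * Q xt y := by ring
      rw [e] at h
      rw [← hL, ← hC] at h
      simp only [hGdef]
      linarith
    have t1 := Finset.sum_le_sum h1
    have t2 := Finset.sum_le_sum h2
    have tot : (∑ y ∈ S, (G y + C*(Q x y + Q xt y)))
        + ∑ y ∈ Sᶜ, (G y + C*(Q x y + Q xt y)) = ∑ y, (G y + C*(Q x y + Q xt y)) :=
      Finset.sum_add_sum_compl S _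
    have tot2 : ∑ y, (G y + C*(Q x y + Q xt y)) = (∑ y, G y) + C * 2 := by
      have e1 : (∑ y, (G y + C*(Q x y + Q xt y)))
          = (∑ y, G y) + ∑ y, C*(Q x y + Q xt y) := Finset.sum_add_distrib
      have e2 : (∑ y, (Q x y + Q xt y)) = 2 := by
        rw [Finset.sum_add_distrib, hQ1 x, hQ1 xt]; norm_num
      rw [e1, ← Finset.mul_sum, e2]
    have compl_x : ∑ y ∈ Sᶜ, Q x y = 1 - α := by
      have h := Finset.sum_add_sum_compl S (Q x)
      rw [hQ1 x] at h
      linarith [h]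
    have compl_xt : ∑ y ∈ Sᶜ, Q xt y = 1 - β := by
      have h := Finset.sum_add_sum_compl S (Q xt)
      rw [hQ1 xt] at h
      linarith [h]
    have l1 : ∑ y ∈ S, (L/4 * (Q x y - Q xt y)) = L/4 * (α - β) := by
      rw [← Finset.mul_sum, Finset.sum_sub_distrib]
    have l2 : ∑ y ∈ Sᶜ, (L/4 * (Q xt y - Q x y)) = L/4 * ((1-β) - (1-α)) := by
      rw [← Finset.mul_sum, Finset.sum_sub_distrib, compl_xt, compl_x]
    rw [l1] at t1
    rw [l2] at t2
    have hfin : L/4 * (α - β) + L/4 * ((1-β) - (1-α)) ≤ (∑ y, G y) + C * 2 := by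
      calc L/4 * (α - β) + L/4 * ((1-β) - (1-α))
          ≤ (∑ y ∈ S, (G y + C*(Q x y + Q xt y)))
            + ∑ y ∈ Sᶜ, (G y + C*(Q x y + Q xt y)) := add_le_add t1 t2
        _ = (∑ y, G y) + C * 2 := by rw [tot, tot2]
    nlinarith [hfin, hJSDle]
  -- case analysis on p
  rcases eq_or_lt_of_le hp0 with hp | hp
  · rw [← hp]
    linarith
  · rcases eq_or_lt_of_le hp2 with hp2' | hp2'
    · -- p = 1/2, so ε = 0
      have hl : Real.log ((1:ℝ)/2) = -Real.log 2 := by rw [one_div, Real.log_inv]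
      have hεz : ε = 0 := by
        rw [hp2'] at hpε
        norm_num [hl] at hpε
        linarith
      have hq : ∀ q : ℝ, 0 < q → q < 1/2 → α - β ≤ 1 - 2*q := by
        intro q hq0 hq2
        have hk := key q hq0 hq2
        have hLpos : 0 < (Real.log (1-q) - Real.log q) / 2 := by
          have : Real.log q < Real.log (1-q) := Real.log_lt_log hq0 (by linarith)
          linarith
        have hent := entropy_le q hq0 (by linarith)
        have hmul : (Real.log (1-q) - Real.log q) / 2 * (α - β)
            ≤ (Real.log (1-q) - Real.log q) / 2 * (1 - 2*q) := by
          rw [hεz] at hk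
          nlinarith [hk, hent]
        exact le_of_mul_le_mul_left hmul hLpos
      rw [hp2']
      by_contra hcon
      push_neg at hcon
      have hd : 0 < α - β := by linarith
      have hd1 : α - β ≤ 1 := by linarith
      have hb := hq (1/2 - (α - β)/4) (by linarith) (by linarith)
      linarith
    · -- 0 < p < 1/2
      have hk := key p hp hp2'
      have hLpos : 0 < (Real.log (1-p) - Real.log p) / 2 := by
        have : Real.log p < Real.log (1-p) := Real.log_lt_log hp (by linarith)
        linarith
      rw [hpε] at hk
      have hmul : (Real.log (1-p) - Real.log p) / 2 * (α - β)
          ≤ (Real.log (1-p) - Real.log p) / 2 * (1 - 2*p) := by nlinarith [hk]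
      have := le_of_mul_le_mul_left hmul hLpos
      linarith
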